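/- arXiv:1509.06629 — 2 statements merged into one kernel-verified Lean document; each statement's English description precedes it below -/
import Mathlib

section
/- Let (u_0, v_0) and (u_1, v_1) be nonzero vectors in C^2 representing distinct points of CP^1, and let L_i(u,v) = u_i v - v_i u. Then for the degree-k bilinear pairing, (L_0^k, L_1^k) = (u_0 v_1 - v_0 u_1)^k, which is nonzero. -/
/-!
By the binomial theorem the `i`-th coefficient of `(u X - v)^k` is `binom(k,i) u^i (-v)^(k-i)`.
In the `i`-th term of the pairing one binomial coefficient cancels against `1/binom(k,i)` and
the sign `(-1)^i` against `(-v₁)^i`, leaving the `i`-th term of the binomial expansion of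
`(u₀ v₁ - v₀ u₁)^k`. This determinant vanishes only when `(u₁, v₁)` is a multiple of `(u₀, v₀)`.
-/

open Polynomial Finset

/-- The bilinear pairing on binary forms of degree `k`, where a form
`q(u,v) = ∑ c_i u^(k-i) v^i` is encoded as the polynomial `∑ c_i X^i` (i.e. `u = 1`,
`X = v`):  `(q, q~) = ∑_{i=0}^k (-1)^i c_i d_{k-i} / binom(k,i)`. -/
noncomputable def bform (k : ℕ) (q r : Polynomial ℂ) : ℂ :=
  ∑ i ∈ Finset.range (k + 1), (-1) ^ i * q.coeff i * r.coeff (k - i) / (k.choose i : ℂ)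

theorem coeff_C_mul_X_add_C_pow {R : Type*} [CommSemiring R] (a b : R) {k i : ℕ} (hi : i ≤ k) :
    ((C a * X + C b) ^ k).coeff i = k.choose i * a ^ i * b ^ (k - i) := by
  have hterm : ∀ j, (C a * X) ^ j * C b ^ (k - j) * (k.choose j : R[X]) =
      C (k.choose j * a ^ j * b ^ (k - j)) * X ^ j := fun j => by
    simp only [mul_pow, map_mul, map_pow, map_natCast]
    ring
  simp only [add_pow, finsetSum_coeff, hterm, coeff_C_mul_X_pow]
  rw [sum_ite_eq, if_pos (mem_range_succ_iff.2 hi)]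

theorem coeff_C_mul_X_sub_C_pow {R : Type*} [CommRing R] (a b : R) {k i : ℕ} (hi : i ≤ k) :
    ((C a * X - C b) ^ k).coeff i = k.choose i * a ^ i * (-b) ^ (k - i) := by
  rw [sub_eq_add_neg, ← C_neg, coeff_C_mul_X_add_C_pow _ _ hi]

theorem bform_C_mul_X_sub_C_pow (k : ℕ) (u₀ v₀ u₁ v₁ : ℂ) :
    bform k ((C u₀ * X - C v₀) ^ k) ((C u₁ * X - C v₁) ^ k) = (u₀ * v₁ - v₀ * u₁) ^ k := by
  rw [bform, sub_eq_add_neg (u₀ * v₁), add_pow]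
  refine Finset.sum_congr rfl fun i hi => ?_
  have hik : i ≤ k := mem_range_succ_iff.1 hi
  have hchoose : (k.choose i : ℂ) ≠ 0 := Nat.cast_ne_zero.2 (Nat.choose_pos hik).ne'
  rw [coeff_C_mul_X_sub_C_pow _ _ hik, coeff_C_mul_X_sub_C_pow _ _ (Nat.sub_le k i),
    Nat.sub_sub_self hik, Nat.choose_symm hik]
  have hsign : (-1 : ℂ) ^ i * (-v₁) ^ i = v₁ ^ i := by rw [← mul_pow, neg_one_mul, neg_neg]
  rw [neg_mul_eq_neg_mul, mul_pow, div_eq_iff hchoose]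
  linear_combination (k.choose i : ℂ) ^ 2 * u₀ ^ i * (-v₀) ^ (k - i) * u₁ ^ (k - i) * hsign

theorem exists_smul_eq_of_mul_sub_mul_eq_zero {K : Type*} [Field K] {u₀ v₀ u₁ v₁ : K}
    (h₀ : (u₀, v₀) ≠ 0) (hdet : u₀ * v₁ - v₀ * u₁ = 0) :
    ∃ c : K, (u₁, v₁) = c • (u₀, v₀) := by
  rcases eq_or_ne u₀ 0 with hu | hu
  · have hv : v₀ ≠ 0 := fun hv => h₀ (by simp [hu, hv])
    refine ⟨v₁ / v₀, Prod.ext ?_ ?_⟩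
    · simp only [hu, zero_mul, zero_sub, neg_eq_zero, mul_eq_zero, hv, false_or] at hdet
      simp [hu, hdet]
    · simp [hv]
  · refine ⟨u₁ / u₀, Prod.ext ?_ ?_⟩
    · simp [hu]
    · simp only [Prod.smul_snd, smul_eq_mul]
      field_simp
      linear_combination hdet

theorem bform_pow_det_general (k : ℕ) (u₀ v₀ u₁ v₁ : ℂ)
    (h₀ : ((u₀, v₀) : ℂ × ℂ) ≠ 0)
    (hdist : ¬ ∃ c : ℂ, ((u₁, v₁) : ℂ × ℂ) = c • (u₀, v₀)) :
    bform k ((Polynomial.C u₀ * Polynomial.X - Polynomial.C v₀) ^ k)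
        ((Polynomial.C u₁ * Polynomial.X - Polynomial.C v₁) ^ k)
      = (u₀ * v₁ - v₀ * u₁) ^ k ∧ (u₀ * v₁ - v₀ * u₁) ^ k ≠ 0 :=
  ⟨bform_C_mul_X_sub_C_pow k u₀ v₀ u₁ v₁,
    pow_ne_zero k fun hdet => hdist (exists_smul_eq_of_mul_sub_mul_eq_zero h₀ hdet)⟩

/-- if `(u₀,v₀)` and `(u₁,v₁)` are nonzero vectors of `ℂ²` representing
distinct points of `ℂP¹` (i.e. non-proportional), and `Lᵢ = uᵢ v - vᵢ u` (encoded as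
`uᵢ X - vᵢ`), then `(L₀^k, L₁^k) = (u₀ v₁ - v₀ u₁)^k ≠ 0`. -/
theorem bform_pow_det (k : ℕ) (u₀ v₀ u₁ v₁ : ℂ)
    (h₀ : ((u₀, v₀) : ℂ × ℂ) ≠ 0) (h₁ : ((u₁, v₁) : ℂ × ℂ) ≠ 0)
    (hdist : ¬ ∃ c : ℂ, ((u₁, v₁) : ℂ × ℂ) = c • (u₀, v₀)) :
    bform k ((Polynomial.C u₀ * Polynomial.X - Polynomial.C v₀) ^ k)
        ((Polynomial.C u₁ * Polynomial.X - Polynomial.C v₁) ^ k)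
      = (u₀ * v₁ - v₀ * u₁) ^ k ∧ (u₀ * v₁ - v₀ * u₁) ^ k ≠ 0 :=
  bform_pow_det_general k u₀ v₀ u₁ v₁ h₀ hdist
end

section
/- If z_1, ..., z_n are distinct complex numbers (affine points of CP^1 with lifts (1, z_i)), then the matrix whose I-th column records the coefficients of p_I = Lambda_{q_I}^{\odot d} in the monomial basis of degree-d polynomials in z_0,...,z_k has nonzero determinant; equivalently, the generalized Lagrange interpolation problem of prescribing values of a degree-d polynomial in k+1 variables at the binom(n,d) points corresponding to d-subsets has a unique solution. -/
/-!
Pairing `Λ_q = (q, -)` with `(X - w)^k` evaluates `q` at `w`. Hence, if `v_w` is the coefficient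
vector of `(X - w)^k` and `ℓ_q = ∑ᵢ (q, Xⁱ) zᵢ`, differentiating `ℓ_q^d` in the directions
`v_{z_j}`, `j ∈ J`, leaves the constant `d! ∏_{j ∈ J} q(z_j)`. For `q = q_I` this vanishes unless
`J ⊆ I`, i.e. `J = I`, and for `J = I` it is nonzero because the `z_j` are distinct; so these
functionals are dual to the family `p_I`.
-/

open Polynomial Finset

section DirectionalDerivative

variable {R σ : Type*} [CommSemiring R] [Fintype σ]

noncomputable def dirDeriv (v : σ → R) : Derivation R (MvPolynomial σ R) (MvPolynomial σ R) :=
  ∑ i, v i • MvPolynomial.pderiv i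

theorem dirDeriv_apply (v : σ → R) (p : MvPolynomial σ R) :
    dirDeriv v p = ∑ i, v i • MvPolynomial.pderiv i p := by
  rw [dirDeriv, ← Derivation.coeFnAddMonoidHom_apply, map_sum]
  simp [Derivation.coeFnAddMonoidHom_apply]

theorem dirDeriv_sum_C_mul_X (v c : σ → R) :
    dirDeriv v (∑ i, MvPolynomial.C (c i) * MvPolynomial.X i) = MvPolynomial.C (v ⬝ᵥ c) := by
  classical
  simp [dirDeriv_apply, MvPolynomial.pderiv_X, Pi.single_apply, dotProduct,
    MvPolynomial.smul_eq_C_mul, mul_comm]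

noncomputable def iterDirDeriv (L : List (σ → R)) : Module.End R (MvPolynomial σ R) :=
  (L.map fun v => (dirDeriv v).toLinearMap).prod

theorem iterDirDeriv_sum_C_mul_X_pow (c : σ → R) (L : List (σ → R)) :
    iterDirDeriv L ((∑ i, MvPolynomial.C (c i) * MvPolynomial.X i) ^ L.length) =
      MvPolynomial.C (L.length.factorial * (L.map (· ⬝ᵥ c)).prod) := by
  induction L using List.reverseRecOn with
  | nil => simp [iterDirDeriv]
  | append_singleton L v ih =>
    set ℓ := ∑ i, MvPolynomial.C (c i) * MvPolynomial.X i
    have hderiv : dirDeriv v (ℓ ^ (L.length + 1)) =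
        (((L.length + 1 : ℕ) : R) * v ⬝ᵥ c) • ℓ ^ L.length := by
      rw [Derivation.leibniz_pow, dirDeriv_sum_C_mul_X, Nat.add_sub_cancel,
        MvPolynomial.smul_eq_C_mul, smul_eq_mul, nsmul_eq_mul]
      simp only [map_mul, map_natCast]
      ring
    rw [iterDirDeriv, List.map_append, List.prod_append, ← iterDirDeriv]
    simp only [List.map_cons, List.map_nil, List.prod_cons, List.prod_nil, mul_one,
      Module.End.mul_apply, Derivation.coeFn_coe, List.length_append, List.length_singleton]
    rw [hderiv, map_smul, ih, MvPolynomial.smul_eq_C_mul, ← map_mul, List.map_append,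
      List.prod_append, Nat.factorial_succ]
    simp only [List.map_cons, List.map_nil, List.prod_cons, List.prod_nil, mul_one]
    push_cast
    congr 1
    ring

end DirectionalDerivative

theorem bform_X_pow {k i : ℕ} (hik : i ≤ k) (q : ℂ[X]) :
    bform k q (X ^ i) = (-1) ^ (k - i) * q.coeff (k - i) / (k.choose (k - i) : ℂ) := by
  rw [bform, Finset.sum_eq_single_of_mem (k - i) (by simp only [mem_range]; omega)]
  · rw [Nat.sub_sub_self hik, coeff_X_pow_self, mul_one]
  · intro j hj hne
    rw [coeff_X_pow, if_neg (by simp only [Finset.mem_range] at hj; omega), mul_zero, zero_div]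

theorem dotProduct_coeff_bform_X_pow (k : ℕ) (q r : ℂ[X]) :
    (fun i : Fin (k + 1) => r.coeff i) ⬝ᵥ (fun i => bform k q (X ^ (i : ℕ))) = bform k q r := by
  rw [dotProduct, Fin.sum_univ_eq_sum_range (fun i => r.coeff i * bform k q (X ^ i)),
    bform, ← Finset.sum_range_reflect]
  refine Finset.sum_congr rfl fun i hi => ?_
  have hik : i ≤ k := Nat.lt_succ_iff.mp (Finset.mem_range.mp hi)
  rw [bform_X_pow (by omega), Nat.add_sub_cancel, Nat.sub_sub_self hik]
  ring

theorem bform_X_sub_C_pow {k : ℕ} {q : ℂ[X]} (hq : q.natDegree ≤ k) (w : ℂ) :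
    bform k q ((X - C w) ^ k) = q.eval w := by
  rw [eval_eq_sum_range' (Nat.lt_succ_of_le hq), bform]
  refine Finset.sum_congr rfl fun i hi => ?_
  have hik : i ≤ k := Nat.lt_succ_iff.mp (Finset.mem_range.mp hi)
  have hchoose : (k.choose i : ℂ) ≠ 0 := by exact_mod_cast (Nat.choose_pos hik).ne'
  rw [sub_eq_add_neg, ← C_neg, coeff_X_add_C_pow, Nat.sub_sub_self hik, Nat.choose_symm hik]
  field_simp
  rw [neg_pow w, mul_mul_mul_comm, ← mul_pow, neg_one_mul, neg_neg, one_pow, one_mul]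

theorem iterDirDeriv_sum_C_bform_mul_X_pow {k : ℕ} {q : ℂ[X]} (hq : q.natDegree ≤ k)
    (ws : List ℂ) :
    iterDirDeriv (ws.map fun w (i : Fin (k + 1)) => ((X - C w) ^ k).coeff i)
        ((∑ i : Fin (k + 1), MvPolynomial.C (bform k q (X ^ (i : ℕ))) * MvPolynomial.X i) ^
          ws.length) =
      MvPolynomial.C (ws.length.factorial * (ws.map q.eval).prod) := by
  have h := iterDirDeriv_sum_C_mul_X_pow (fun i : Fin (k + 1) => bform k q (X ^ (i : ℕ)))
    (ws.map fun w i => ((X - C w) ^ k).coeff i)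
  simpa only [List.length_map, List.map_map, Function.comp_def, dotProduct_coeff_bform_X_pow,
    bform_X_sub_C_pow hq] using h

theorem LinearIndependent.of_pairwise_dual_eq_zero_ne_zero {ι K M : Type*} [Field K]
    [AddCommGroup M] [Module K M] (v : ι → M) (f : ι → Module.Dual K M)
    (h0 : Pairwise fun i j => f i (v j) = 0) (hne : ∀ i, f i (v i) ≠ 0) :
    LinearIndependent K v :=
  .of_pairwise_dual_eq_zero_one v (fun i => (f i (v i))⁻¹ • f i)
    (fun i j hij => by simp [h0 hij]) (fun i => by simp [hne i])

theorem prod_eval_prod_X_sub_C_eq_zero_iff {ι R : Type*} [Fintype ι] [DecidableEq ι]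
    [CommRing R] [IsDomain R] {z : ι → R} (hz : Function.Injective z) (I J : Finset ι) :
    ∏ j ∈ J, (∏ j' ∈ Iᶜ, (X - C (z j'))).eval (z j) = 0 ↔ ¬ J ⊆ I := by
  simp [eval_prod, Finset.prod_eq_zero_iff, sub_eq_zero, hz.eq_iff, Finset.not_subset]

theorem generalized_lagrange_general (n d : ℕ)
    (z : Fin n → ℂ) (hz : Function.Injective z) :
    LinearIndependent ℂ
      (fun I : Finset.powersetCard d (Finset.univ : Finset (Fin n)) =>
        (∑ i : Fin (n - d + 1),
            MvPolynomial.C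
              (bform (n - d)
                (∏ j ∈ ((I : Finset (Fin n)))ᶜ, (Polynomial.X - Polynomial.C (z j)))
                (Polynomial.X ^ (i : ℕ)))
              * MvPolynomial.X i) ^ d) := by
  let q (I : Finset (Fin n)) : ℂ[X] := ∏ j ∈ Iᶜ, (X - C (z j))
  let φ (J : Finset (Fin n)) : Module.Dual ℂ (MvPolynomial (Fin (n - d + 1)) ℂ) :=
    MvPolynomial.lcoeff ℂ 0 ∘ₗ
      iterDirDeriv (J.toList.map fun j i => ((X - C (z j)) ^ (n - d)).coeff i)
  have hcard (I : Finset.powersetCard d (Finset.univ : Finset (Fin n))) :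
      (I : Finset (Fin n)).card = d := (Finset.mem_powersetCard.mp I.2).2
  have hφ (I J : Finset.powersetCard d (Finset.univ : Finset (Fin n))) :
      φ J ((∑ i : Fin (n - d + 1),
        MvPolynomial.C (bform (n - d) (q I) (X ^ (i : ℕ))) * MvPolynomial.X i) ^ d) =
        d.factorial * ∏ j ∈ (J : Finset (Fin n)), (q I).eval (z j) := by
    have h := iterDirDeriv_sum_C_bform_mul_X_pow (k := n - d) (q := q I)
      (by simp [q, card_compl, hcard I])
      ((J : Finset (Fin n)).toList.map z)
    simp only [List.length_map, Finset.length_toList, hcard J, List.map_map,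
      Function.comp_def, Finset.prod_map_toList] at h
    simp only [φ, LinearMap.comp_apply, h, MvPolynomial.lcoeff_apply, MvPolynomial.coeff_zero_C]
  refine .of_pairwise_dual_eq_zero_ne_zero _ (fun J => φ J) (fun J I hJI => ?_) (fun J => ?_)
  · have hJI' : ¬ (J : Finset (Fin n)) ⊆ I := fun hsub => hJI <| Subtype.ext <|
      Finset.eq_of_subset_of_card_le hsub (by rw [hcard I, hcard J])
    refine (hφ I J).trans ?_
    rw [(prod_eval_prod_X_sub_C_eq_zero_iff hz _ _).mpr hJI', mul_zero]
  · refine (hφ J J).trans_ne (mul_ne_zero (Nat.cast_ne_zero.mpr d.factorial_ne_zero) ?_)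
    exact fun h => (prod_eval_prod_X_sub_C_eq_zero_iff hz _ _).mp h subset_rfl

/-- generalized Lagrange interpolation: for distinct complex numbers
`z_1, …, z_n` (affine points of `ℂP¹` with lifts `(1, zᵢ)`, so `Lᵢ = v - zᵢ u` is the
polynomial `X - zᵢ`), the elements `p_I = Λ_{q_I}^{⊙ d}` (`q_I = ∏_{j ∈ Iᶜ} L_j`),
viewed in `P_{k,d}` via `Sym^d(P_{1,k}^*) = P_{k,d}` as the homogeneous polynomials
`(∑_i (q_I, X^i) · zᵢ)^d` in the variables `z_0, …, z_k`, are linearly independent;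
equivalently the matrix of their coefficients in the monomial basis has nonzero
determinant, i.e. the generalized Lagrange interpolation problem at the `binom(n,d)`
points corresponding to `d`-subsets has a unique solution. -/
theorem generalized_lagrange (n d : ℕ) (hd : 1 ≤ d) (hdn : d ≤ n - 1)
    (z : Fin n → ℂ) (hz : Function.Injective z) :
    LinearIndependent ℂ
      (fun I : Finset.powersetCard d (Finset.univ : Finset (Fin n)) =>
        (∑ i : Fin (n - d + 1),
            MvPolynomial.C
              (bform (n - d)
                (∏ j ∈ ((I : Finset (Fin n)))ᶜ, (Polynomial.X - Polynomial.C (z j)))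
                (Polynomial.X ^ (i : ℕ)))
              * MvPolynomial.X i) ^ d) :=
  generalized_lagrange_general n d z hz
end
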